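/- Let d : YoungDiagram → ℕ count standard Young tableaux. Then for every n : ℕ and every Young diagram λ with λ.card = n, the family of Plancherel weights is coherent under the projection forgetting the last cell: ∑ over Λ with λ ⋖ Λ of (d Λ : ℝ) / (n+1)! equals (d λ : ℝ) / n!. -/

import Mathlib

/-- `CoversBelow μ lam` (written `μ ⋖ lam` informally): `μ ≤ lam` and
`μ.card + 1 = lam.card`. -/
def CoversBelow (μ lam : YoungDiagram) : Prop :=
  μ ≤ lam ∧ μ.card + 1 = lam.card

/-- `d : YoungDiagram → ℕ` counts standard Young tableaux:
`d ⊥ = 1` and, for every `lam ≠ ⊥`, `d lam` is the sum of `d μ` over the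
(finite) set of diagrams `μ` covered by `lam`. -/
def CountsSYT (d : YoungDiagram → ℕ) : Prop :=
  d ⊥ = 1 ∧ ∀ lam : YoungDiagram, lam ≠ ⊥ →
    d lam = ∑ᶠ μ ∈ {μ : YoungDiagram | CoversBelow μ lam}, d μ

/-!
Write `U μ` for the sum of `d ν` over the diagrams `ν ⋗ μ`, and `a μ`, `r μ` for the numbers of
diagrams covering, resp. covered by, `μ`. Expanding each `d ν` by the recursion gives
`U μ = a μ * d μ + S`, where `S` sums `d ρ` over the pairs `μ ⋖ ν ⋗ ρ` with `ρ ≠ μ`. Young's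
lattice is distributive, so `(ν, ρ) ↦ (μ ⊓ ρ, ρ)` matches these pairs with the pairs `μ ⋗ ν ⋖ ρ`,
`ρ ≠ μ`; hence `S = ∑_{ν ⋖ μ} (U ν - d μ)`, which by induction on `|μ|` is `|μ| * d μ - r μ * d μ`.
Since `a μ = r μ + 1`, this gives `U μ = (|μ| + 1) * d μ`; divide by `(|μ| + 1)!`.
-/

open Finset

theorem IsLowerSet.insert_of_Iio_subset {α : Type*} [PartialOrder α] {s : Set α} {a : α}
    (hs : IsLowerSet s) (ha : Set.Iio a ⊆ s) : IsLowerSet (insert a s) := by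
  rintro b c hcb (rfl | hb)
  · rcases hcb.lt_or_eq with hlt | rfl
    · exact Or.inr (ha hlt)
    · exact Or.inl rfl
  · exact Or.inr (hs hcb hb)

namespace YoungDiagram

instance : DecidableEq YoungDiagram := fun _ _ => decidable_of_iff _ YoungDiagram.ext_iff.symm

variable {μ ν : YoungDiagram} {i : ℕ}

theorem card_le_card (h : μ ≤ ν) : μ.card ≤ ν.card :=
  Finset.card_le_card (cells_subset_iff.2 h)

theorem card_lt_card (h : μ < ν) : μ.card < ν.card :=
  Finset.card_lt_card (cells_ssubset_iff.2 h)

theorem eq_of_le_of_card_le (h : μ ≤ ν) (hcard : ν.card ≤ μ.card) : μ = ν :=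
  YoungDiagram.ext (Finset.eq_of_subset_of_card_le (cells_subset_iff.2 h) hcard)

theorem card_sup_add_card_inf (μ ν : YoungDiagram) :
    (μ ⊔ ν).card + (μ ⊓ ν).card = μ.card + ν.card := by
  simpa only [← cells_sup, ← cells_inf] using Finset.card_union_add_card_inter μ.cells ν.cells

@[simp]
theorem card_bot : (⊥ : YoungDiagram).card = 0 := by
  simp [YoungDiagram.card, cells_bot]

end YoungDiagram

namespace CoversBelow

open YoungDiagram

variable {μ ν ρ : YoungDiagram}

theorem ne_bot (h : CoversBelow μ ν) : ν ≠ ⊥ := by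
  rintro rfl
  simpa using h.2

theorem sup_eq (hμ : CoversBelow μ ρ) (hν : CoversBelow ν ρ) (hne : μ ≠ ν) : μ ⊔ ν = ρ := by
  obtain ⟨hμρ, hμc⟩ := hμ
  obtain ⟨hνρ, hνc⟩ := hν
  have hlt : μ < μ ⊔ ν := lt_of_le_of_ne le_sup_left fun h =>
    hne (eq_of_le_of_card_le (le_sup_right.trans h.ge) (by omega)).symm
  have := YoungDiagram.card_lt_card hlt
  exact eq_of_le_of_card_le (sup_le hμρ hνρ) (by omega)

theorem inf_eq (hμ : CoversBelow ρ μ) (hν : CoversBelow ρ ν) (hne : μ ≠ ν) : μ ⊓ ν = ρ := by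
  obtain ⟨hρμ, hμc⟩ := hμ
  obtain ⟨hρν, hνc⟩ := hν
  have hlt : μ ⊓ ν < μ := lt_of_le_of_ne inf_le_left fun h =>
    hne (eq_of_le_of_card_le (h.ge.trans inf_le_right) (by omega))
  have := YoungDiagram.card_lt_card hlt
  have := YoungDiagram.card_le_card (le_inf hρμ hρν)
  exact (eq_of_le_of_card_le (le_inf hρμ hρν) (by omega)).symm

theorem inf_coversBelow (hμ : CoversBelow μ ρ) (hν : CoversBelow ν ρ) (hne : μ ≠ ν) :
    CoversBelow (μ ⊓ ν) μ ∧ CoversBelow (μ ⊓ ν) ν := by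
  have := card_sup_add_card_inf μ ν
  rw [sup_eq hμ hν hne] at this
  have := hμ.2
  have := hν.2
  exact ⟨⟨inf_le_left, by omega⟩, ⟨inf_le_right, by omega⟩⟩

theorem coversBelow_sup (hμ : CoversBelow ρ μ) (hν : CoversBelow ρ ν) (hne : μ ≠ ν) :
    CoversBelow μ (μ ⊔ ν) ∧ CoversBelow ν (μ ⊔ ν) := by
  have := card_sup_add_card_inf μ ν
  rw [inf_eq hμ hν hne] at this
  have := hμ.2
  have := hν.2
  exact ⟨⟨le_sup_left, by omega⟩, ⟨le_sup_right, by omega⟩⟩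

end CoversBelow

namespace YoungDiagram

variable {μ ν : YoungDiagram} {i : ℕ}

def removableRows (μ : YoungDiagram) : Finset ℕ :=
  (range (μ.colLen 0)).filter fun i => μ.rowLen (i + 1) < μ.rowLen i

/-- Row `i + 1` can take a new cell exactly when row `i` can give one up; row `0` always can. -/
def addableRows (μ : YoungDiagram) : Finset ℕ :=
  insert 0 (μ.removableRows.map (addRightEmbedding 1))

theorem mem_removableRows : i ∈ μ.removableRows ↔ μ.rowLen (i + 1) < μ.rowLen i := by
  simp only [removableRows, mem_filter, mem_range, and_iff_right_iff_imp]
  intro h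
  rw [← mem_iff_lt_colLen, mem_iff_lt_rowLen]
  omega

theorem mem_addableRows : i ∈ μ.addableRows ↔ i = 0 ∨ μ.rowLen i < μ.rowLen (i - 1) := by
  cases i <;> simp [addableRows, mem_removableRows]

theorem card_addableRows : #μ.addableRows = #μ.removableRows + 1 := by
  simp [addableRows]

theorem Iio_subset_of_mem_addableRows (h : i ∈ μ.addableRows) :
    Set.Iio (i, μ.rowLen i) ⊆ (μ.cells : Set (ℕ × ℕ)) := by
  rintro ⟨a, b⟩ hab
  simp only [Set.mem_Iio, Prod.lt_iff, Finset.mem_coe, mem_cells, mem_iff_lt_rowLen] at hab ⊢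
  have := μ.rowLen_anti a i
  have := μ.rowLen_anti a (i - 1)
  rw [mem_addableRows] at h
  omega

theorem eq_of_le_of_mem_removableRows (h : i ∈ μ.removableRows) {c : ℕ × ℕ}
    (hc : c ∈ (μ.cells : Set (ℕ × ℕ))) (hle : (i, μ.rowLen i - 1) ≤ c) :
    c = (i, μ.rowLen i - 1) := by
  obtain ⟨a, b⟩ := c
  simp only [Finset.mem_coe, mem_cells, mem_iff_lt_rowLen, Prod.mk_le_mk, Prod.mk.injEq]
    at hc hle ⊢
  have := μ.rowLen_anti i a
  have := μ.rowLen_anti (i + 1) a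
  rw [mem_removableRows] at h
  omega

def addCell (μ : YoungDiagram) (i : ℕ) : YoungDiagram :=
  if h : i ∈ μ.addableRows then
    { cells := insert (i, μ.rowLen i) μ.cells
      isLowerSet := by
        rw [Finset.coe_insert]
        exact μ.isLowerSet.insert_of_Iio_subset (Iio_subset_of_mem_addableRows h) }
  else μ

def removeCell (μ : YoungDiagram) (i : ℕ) : YoungDiagram :=
  if h : i ∈ μ.removableRows then
    { cells := μ.cells.erase (i, μ.rowLen i - 1)
      isLowerSet := by
        rw [Finset.coe_erase]
        exact μ.isLowerSet.erase fun _ hc hle => eq_of_le_of_mem_removableRows h hc hle }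
  else μ

theorem cells_addCell (h : i ∈ μ.addableRows) :
    (μ.addCell i).cells = insert (i, μ.rowLen i) μ.cells := by
  rw [addCell, dif_pos h]

theorem cells_removeCell (h : i ∈ μ.removableRows) :
    (μ.removeCell i).cells = μ.cells.erase (i, μ.rowLen i - 1) := by
  rw [removeCell, dif_pos h]

theorem coversBelow_iff_exists_insert :
    CoversBelow μ ν ↔ ∃ c ∉ μ.cells, insert c μ.cells = ν.cells := by
  rw [Finset.exists_eq_insert_iff, cells_subset_iff]
  rfl

theorem mem_of_lt_of_insert_eq {c c' : ℕ × ℕ} (h : insert c μ.cells = ν.cells) (hlt : c' < c) :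
    c' ∈ μ := by
  have hc' : c' ∈ ν.cells := ν.isLowerSet hlt.le (by rw [← h]; exact mem_insert_self c _)
  rw [← h, mem_insert] at hc'
  exact hc'.resolve_left hlt.ne

theorem eq_of_le_of_insert_eq {c c' : ℕ × ℕ} (hc : c ∉ μ.cells) (h : insert c μ.cells = ν.cells)
    (hc' : c' ∈ ν) (hle : c ≤ c') : c' = c := by
  rw [← mem_cells, ← h, mem_insert] at hc'
  exact hc'.resolve_right fun hμ => hc (μ.isLowerSet hle hμ)

theorem coversBelow_addCell (h : i ∈ μ.addableRows) : CoversBelow μ (μ.addCell i) :=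
  coversBelow_iff_exists_insert.2
    ⟨_, by simp [mem_iff_lt_rowLen], (cells_addCell h).symm⟩

theorem coversBelow_removeCell (h : i ∈ μ.removableRows) : CoversBelow (μ.removeCell i) μ := by
  have hmem : (i, μ.rowLen i - 1) ∈ μ.cells := by
    rw [mem_cells, mem_iff_lt_rowLen]
    have := mem_removableRows.1 h
    omega
  refine coversBelow_iff_exists_insert.2 ⟨(i, μ.rowLen i - 1), ?_, ?_⟩
  · simp [cells_removeCell h]
  · rw [cells_removeCell h, insert_erase hmem]

theorem _root_.CoversBelow.exists_addCell (h : CoversBelow μ ν) :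
    ∃ i ∈ μ.addableRows, μ.addCell i = ν := by
  obtain ⟨⟨i, j⟩, hc, hν⟩ := coversBelow_iff_exists_insert.1 h
  have hj : μ.rowLen i = j := by
    by_contra hne
    have hlt : (i, μ.rowLen i) < (i, j) := by
      rw [mem_cells, mem_iff_lt_rowLen] at hc
      exact Prod.mk_lt_mk_iff_right.2 (by omega)
    simpa [mem_iff_lt_rowLen] using mem_of_lt_of_insert_eq hν hlt
  have hi : i ∈ μ.addableRows := by
    rw [mem_addableRows, ← mem_iff_lt_rowLen, hj]
    rcases i with _ | i
    · exact Or.inl rfl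
    · exact Or.inr (mem_of_lt_of_insert_eq hν (Prod.mk_lt_mk_iff_left.2 (by omega)))
  exact ⟨i, hi, YoungDiagram.ext (by rw [cells_addCell hi, hj, hν])⟩

theorem _root_.CoversBelow.exists_removeCell (h : CoversBelow μ ν) :
    ∃ i ∈ ν.removableRows, ν.removeCell i = μ := by
  obtain ⟨⟨i, j⟩, hc, hν⟩ := coversBelow_iff_exists_insert.1 h
  have hmem : (i, j) ∈ ν := by rw [← mem_cells, ← hν]; exact mem_insert_self _ _
  have hright : (i, j + 1) ∉ ν := fun h' => by simpa using eq_of_le_of_insert_eq hc hν h' (by simp)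
  have hbelow : (i + 1, j) ∉ ν := fun h' => by simpa using eq_of_le_of_insert_eq hc hν h' (by simp)
  simp only [mem_iff_lt_rowLen] at hmem hright hbelow
  have hj : ν.rowLen i - 1 = j := by omega
  have hi : i ∈ ν.removableRows := mem_removableRows.2 (by omega)
  exact ⟨i, hi, YoungDiagram.ext (by rw [cells_removeCell hi, hj, ← hν, erase_insert hc])⟩

theorem addCell_injOn (μ : YoungDiagram) : Set.InjOn μ.addCell μ.addableRows := by
  intro i hi j hj hij
  have hnew : (i, μ.rowLen i) ∈ insert (j, μ.rowLen j) μ.cells := by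
    rw [← cells_addCell hj, ← hij, cells_addCell hi]
    exact mem_insert_self _ _
  rw [mem_insert, mem_cells, mem_iff_lt_rowLen] at hnew
  exact (Prod.ext_iff.1 (hnew.resolve_right (lt_irrefl _))).1

theorem removeCell_injOn (μ : YoungDiagram) : Set.InjOn μ.removeCell μ.removableRows := by
  intro i hi j hj hij
  by_contra hne
  have hmem : (i, μ.rowLen i - 1) ∈ μ.cells := by
    rw [mem_cells, mem_iff_lt_rowLen]
    have := mem_removableRows.1 hi
    omega
  have hgone : (i, μ.rowLen i - 1) ∉ (μ.removeCell i).cells := by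
    simp [cells_removeCell hi]
  rw [hij, cells_removeCell hj] at hgone
  exact hgone (mem_erase.2 ⟨by simp [hne], hmem⟩)

def upCovers (μ : YoungDiagram) : Finset YoungDiagram :=
  μ.addableRows.image μ.addCell

def downCovers (μ : YoungDiagram) : Finset YoungDiagram :=
  μ.removableRows.image μ.removeCell

theorem mem_upCovers : ν ∈ μ.upCovers ↔ CoversBelow μ ν := by
  refine ⟨fun h => ?_, fun h => mem_image.2 (CoversBelow.exists_addCell h)⟩
  obtain ⟨i, hi, rfl⟩ := mem_image.1 h
  exact coversBelow_addCell hi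

theorem mem_downCovers : μ ∈ ν.downCovers ↔ CoversBelow μ ν := by
  refine ⟨fun h => ?_, fun h => mem_image.2 (CoversBelow.exists_removeCell h)⟩
  obtain ⟨i, hi, rfl⟩ := mem_image.1 h
  exact coversBelow_removeCell hi

theorem coe_upCovers (μ : YoungDiagram) :
    (μ.upCovers : Set YoungDiagram) = {ν | CoversBelow μ ν} :=
  Set.ext fun _ => mem_upCovers

theorem coe_downCovers (ν : YoungDiagram) :
    (ν.downCovers : Set YoungDiagram) = {μ | CoversBelow μ ν} :=
  Set.ext fun _ => mem_downCovers

theorem card_upCovers (μ : YoungDiagram) : #μ.upCovers = #μ.downCovers + 1 := by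
  rw [upCovers, downCovers, card_image_of_injOn μ.addCell_injOn,
    card_image_of_injOn μ.removeCell_injOn, card_addableRows]

end YoungDiagram


namespace YoungDiagram

theorem sum_up_down_erase_eq_sum_down_up_erase {M : Type*} [AddCommMonoid M]
    (f : YoungDiagram → M) (μ : YoungDiagram) :
    ∑ ν ∈ μ.upCovers, ∑ ρ ∈ ν.downCovers.erase μ, f ρ =
      ∑ ν ∈ μ.downCovers, ∑ ρ ∈ ν.upCovers.erase μ, f ρ := by
  rw [sum_sigma', sum_sigma']
  refine sum_nbij' (fun p => ⟨μ ⊓ p.2, p.2⟩) (fun p => ⟨μ ⊔ p.2, p.2⟩) ?_ ?_ ?_ ?_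
    fun _ _ => rfl
  all_goals simp only [mem_sigma, mem_erase, mem_upCovers, mem_downCovers]
  · rintro ⟨ν, ρ⟩ ⟨hν, hne, hρ⟩
    have := hν.inf_coversBelow hρ hne.symm
    exact ⟨this.1, hne, this.2⟩
  · rintro ⟨ν, ρ⟩ ⟨hν, hne, hρ⟩
    have := hν.coversBelow_sup hρ hne.symm
    exact ⟨this.1, hne, this.2⟩
  · rintro ⟨ν, ρ⟩ ⟨hν, hne, hρ⟩
    simp [hν.sup_eq hρ hne.symm]
  · rintro ⟨ν, ρ⟩ ⟨hν, hne, hρ⟩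
    simp [hν.inf_eq hρ hne.symm]

end YoungDiagram

namespace CountsSYT

open YoungDiagram

variable {d : YoungDiagram → ℕ}

theorem eq_sum_downCovers (hd : CountsSYT d) {μ : YoungDiagram} (hμ : μ ≠ ⊥) :
    d μ = ∑ ν ∈ μ.downCovers, d ν := by
  rw [hd.2 μ hμ, ← coe_downCovers, finsum_mem_coe_finset]

theorem card_mul_sum_downCovers (hd : CountsSYT d) (μ : YoungDiagram) :
    μ.card * ∑ ν ∈ μ.downCovers, d ν = μ.card * d μ := by
  rcases eq_or_ne μ ⊥ with rfl | hμ
  · simp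
  · rw [← hd.eq_sum_downCovers hμ]

theorem sum_upCovers (hd : CountsSYT d) (μ : YoungDiagram) :
    ∑ ν ∈ μ.upCovers, d ν = (μ.card + 1) * d μ := by
  obtain ⟨n, hn⟩ : ∃ n, μ.card = n := ⟨_, rfl⟩
  induction n using Nat.strong_induction_on generalizing μ with
  | _ n ih =>
    have up_split : ∀ ν ∈ μ.upCovers, d ν = d μ + ∑ ρ ∈ ν.downCovers.erase μ, d ρ := by
      intro ν hν
      have h := mem_upCovers.1 hν
      rw [hd.eq_sum_downCovers h.ne_bot, add_sum_erase _ _ (mem_downCovers.2 h)]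
    have down_split : ∀ ν ∈ μ.downCovers, ∑ ρ ∈ ν.upCovers.erase μ, d ρ + d μ = n * d ν := by
      intro ν hν
      have h := mem_downCovers.1 hν
      have hcard := h.2
      rw [sum_erase_add _ _ (mem_upCovers.2 h), ih ν.card (by omega) ν rfl, hcard, hn]
    have hdown := sum_congr rfl down_split
    rw [sum_add_distrib, sum_const, smul_eq_mul, ← mul_sum, ← hn, hd.card_mul_sum_downCovers,
      ← sum_up_down_erase_eq_sum_down_up_erase] at hdown
    rw [sum_congr rfl up_split, sum_add_distrib, sum_const, smul_eq_mul, card_upCovers]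
    linarith

end CountsSYT

open YoungDiagram in
theorem plancherel_coherent (d : YoungDiagram → ℕ) (hd : CountsSYT d)
    (n : ℕ) (lam : YoungDiagram) (hcard : lam.card = n) :
    ∑ᶠ Lam ∈ {Lam : YoungDiagram | CoversBelow lam Lam},
        (d Lam : ℝ) / (n + 1).factorial = (d lam : ℝ) / n.factorial := by
  rw [← coe_upCovers, finsum_mem_coe_finset, ← sum_div, ← Nat.cast_sum, hd.sum_upCovers,
    hcard, Nat.factorial_succ]
  push_cast
  field_simp
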